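/- arXiv:2603.18484 — 3 statements merged into one kernel-verified Lean document; each statement's English description precedes it below -/
import Mathlib

section
/- Let P be a finite set of points in general position in ℝ². Let a, b, p, q, r be points of P such that p, q, a, b, r are the vertices of a convex pentagon (in that cyclic order) and the triangle with vertices p, a, b contains no point of P other than its vertices. Then there exist points q′ ∈ P lying in the triangle paq (possibly q′ = q) and r′ ∈ P lying in the triangle pbr (possibly r′ = r) such that p, q′, a, b, r′ are the vertices of a 5-hole of P: a convex pentagon with no point of P in its interior. -/
open scoped Classical

noncomputable section

abbrev Pt : Type := EuclideanSpace ℝ (Fin 2)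

/-- No three distinct points of `P` are collinear. -/
def GenPos (P : Set Pt) : Prop :=
  ∀ a ∈ P, ∀ b ∈ P, ∀ c ∈ P, a ≠ b → a ≠ c → b ≠ c → ¬ Collinear ℝ ({a, b, c} : Set Pt)

/-- A set of points is in convex position if every point is an extreme point:
no point lies in the convex hull of the others. -/
def ConvexPos (S : Set Pt) : Prop := ∀ p ∈ S, p ∉ convexHull ℝ (S \ {p})

/-- The 5-holes of `P`: 5-element subsets of `P` in convex position whose
convex hull has no point of `P` in its interior. -/
def Holes5 (P : Set Pt) : Set (Finset Pt) :=
  {H | H.card = 5 ∧ ↑H ⊆ P ∧ ConvexPos ↑H ∧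
    ∀ x ∈ P, x ∉ interior (convexHull ℝ (H : Set Pt))}

/-- Orientation determinant of the triple `(o, a, b)`. -/
def det2 (o a b : Pt) : ℝ :=
  (a 0 - o 0) * (b 1 - o 1) - (a 1 - o 1) * (b 0 - o 0)

/-- `v` lists the vertices of a strictly convex polygon in cyclic order:
for every edge `v i v (i+1)`, all other vertices lie strictly on the same side. -/
def ConvexCyclicOrder {n : ℕ} [NeZero n] (v : Fin n → Pt) : Prop :=
  ∃ σ : ℝ, (σ = 1 ∨ σ = -1) ∧
    ∀ i j : Fin n, j ≠ i → j ≠ i + 1 → 0 < σ * det2 (v i) (v (i + 1)) (v j)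

/-- `x` lies in the closed angular region at `p` spanned by the rays from `p`
through `a` and through `c` (the convex cone generated by the two rays). -/
def InAngle (a p c x : Pt) : Prop :=
  ∃ s t : ℝ, 0 ≤ s ∧ 0 ≤ t ∧ x = p + s • (a - p) + t • (c - p)

/-- The extreme points (convex-hull vertices) of a planar point set. -/
def extremePts (P : Set Pt) : Set Pt := {p ∈ P | p ∉ convexHull ℝ (P \ {p})}

/-- What remains of `P` after peeling off the first `n` convex layers. -/
def layerRest (P : Set Pt) : ℕ → Set Pt
  | 0 => P
  | n + 1 => layerRest P n \ extremePts (layerRest P n)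

/-- The `i`-th convex layer of `P` (0-indexed). -/
def layer (P : Set Pt) (i : ℕ) : Set Pt := extremePts (layerRest P i)

/-- The number of convex layers of `P`. -/
def numLayers (P : Set Pt) : ℕ := {i | (layer P i).Nonempty}.ncard

/-!
Choose `q'` among the points of `P` in triangle `p a q` off the line `p a` so that `|det2 p a q'|`,
its distance to that line up to a constant factor, is least. Then triangle `p a q'` contains no
other point of `P`: a point of `P` on segment `p a` would lie in the empty triangle `p a b`, and
any other point would be closer to `p a`. Choose `r'` symmetrically.

Replacing a vertex of a convex polygon by a point of the triangle it spans with its two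
neighbours, off the diagonal joining them, keeps the polygon convex provided the remaining
vertices lie on the other side of that diagonal; for a pentagon this is an edge inequality.
Finally, the pentagon `p q' a b r'` is the union of the empty triangles `p q' a`, `p a b` and
`p b r'`, so any point of `P` in it is a vertex, and no vertex of a convex polygon is interior.
-/

open Set Topology

lemma det2_cyclic (u v w : Pt) : det2 u v w = det2 v w u := by
  simp only [det2]; ring

lemma det2_swap (u v w : Pt) : det2 u v w = -det2 v u w := by
  simp only [det2]; ring

lemma det2_swap_right (u v w : Pt) : det2 u v w = -det2 u w v := by
  simp only [det2]; ring

@[simp] lemma det2_self_left (u v : Pt) : det2 u v u = 0 := by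
  simp only [det2]; ring

@[simp] lemma det2_self_right (u v : Pt) : det2 u v v = 0 := by
  simp only [det2]; ring

lemma det2_convexComb (u v x y z : Pt) {α β γ : ℝ} (h : α + β + γ = 1) :
    det2 u v (α • x + β • y + γ • z) = α * det2 u v x + β * det2 u v y + γ * det2 u v z := by
  simp only [det2, PiLp.add_apply, PiLp.smul_apply, smul_eq_mul]
  linear_combination ((v 0 - u 0) * u 1 - (v 1 - u 1) * u 0) * h

lemma det2_add_smul_sub (u v y : Pt) (t : ℝ) :
    det2 u v (u + t • (u - y)) = -t * det2 u v y := by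
  simp only [det2, PiLp.add_apply, PiLp.smul_apply, PiLp.sub_apply, smul_eq_mul]; ring

lemma det2_smul_eq_sum (u v w x : Pt) :
    det2 u v w • x = det2 v w x • u + det2 w u x • v + det2 u v x • w := by
  ext i
  fin_cases i <;>
    simp only [det2, Fin.mk_zero, Fin.mk_one, PiLp.add_apply, PiLp.smul_apply, smul_eq_mul] <;> ring

lemma det2_add_add (u v w x : Pt) :
    det2 v w x + det2 w u x + det2 u v x = det2 u v w := by
  simp only [det2]; ring

lemma det2_eq_zero_of_mem_segment {u v x : Pt} (hx : x ∈ segment ℝ u v) : det2 u v x = 0 := by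
  obtain ⟨s, t, -, -, hst, rfl⟩ := hx
  have h := det2_convexComb u v u v 0 (γ := 0) (by linarith : s + t + 0 = 1)
  simpa using h

lemma mem_convexHull_triple {u v w x : Pt} :
    x ∈ convexHull ℝ {u, v, w} ↔
      ∃ α β γ : ℝ, 0 ≤ α ∧ 0 ≤ β ∧ 0 ≤ γ ∧ α + β + γ = 1 ∧ x = α • u + β • v + γ • w := by
  constructor
  · rw [convexHull_insert (insert_nonempty _ _), convexHull_pair, convexJoin_singleton_left]
    simp only [mem_iUnion]
    rintro ⟨y, ⟨β, γ, hβ, hγ, hβγ, rfl⟩, s, t, hs, ht, hst, rfl⟩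
    refine ⟨s, t * β, t * γ, hs, by positivity, by positivity, ?_, ?_⟩
    · linear_combination hst + t * hβγ
    · simp only [smul_add, smul_smul, add_assoc]
  · rintro ⟨α, β, γ, hα, hβ, hγ, h, rfl⟩
    have := (convex_convexHull ℝ ({u, v, w} : Set Pt)).sum_mem (t := Finset.univ)
      (w := ![α, β, γ]) (z := ![u, v, w]) (by simp [Fin.forall_fin_succ, *])
      (by simp [Fin.sum_univ_three, h]) (fun i _ => subset_convexHull ℝ _ (by fin_cases i <;> simp))
    simpa [Fin.sum_univ_three, add_assoc] using this

lemma mem_convexHull_triple_of_det2_nonneg {u v w x : Pt} {σ : ℝ} (h : 0 < σ * det2 u v w)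
    (hu : 0 ≤ σ * det2 v w x) (hv : 0 ≤ σ * det2 w u x) (hw : 0 ≤ σ * det2 u v x) :
    x ∈ convexHull ℝ {u, v, w} := by
  refine mem_convexHull_triple.2 ⟨σ * det2 v w x / (σ * det2 u v w),
    σ * det2 w u x / (σ * det2 u v w), σ * det2 u v x / (σ * det2 u v w),
    by positivity, by positivity, by positivity, ?_, ?_⟩
  · rw [← add_div, ← add_div, div_eq_one_iff_eq h.ne']
    linear_combination σ * det2_add_add u v w x
  · apply smul_right_injective Pt h.ne'
    simp only [smul_add, smul_smul, mul_div_cancel₀ _ h.ne']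
    rw [mul_smul, det2_smul_eq_sum]
    simp only [smul_add, smul_smul]

lemma convex_det2_nonneg (u v : Pt) (σ : ℝ) : Convex ℝ {x | 0 ≤ σ * det2 u v x} := by
  intro x hx y hy s t hs ht hst
  have h := det2_convexComb u v x y 0 (γ := 0) (by linarith : s + t + 0 = 1)
  simp only [zero_smul, add_zero, zero_mul] at h
  change 0 ≤ σ * det2 u v x at hx
  change 0 ≤ σ * det2 u v y at hy
  change 0 ≤ σ * det2 u v (s • x + t • y)
  rw [h]
  nlinarith

lemma notMem_interior_det2_nonneg {u v y : Pt} {σ : ℝ} (hy : 0 < σ * det2 u v y) :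
    u ∉ interior {x | 0 ≤ σ * det2 u v x} := by
  intro hu
  have hpath : ∀ᶠ t in 𝓝[>] (0 : ℝ), u + t • (u - y) ∈ {x | 0 ≤ σ * det2 u v x} := by
    refine nhdsWithin_le_nhds (Continuous.continuousAt (by fun_prop) |>.preimage_mem_nhds ?_)
    simpa using mem_interior_iff_mem_nhds.1 hu
  obtain ⟨t, ht, ht0⟩ := (hpath.and self_mem_nhdsWithin).exists
  replace ht : 0 ≤ σ * det2 u v (u + t • (u - y)) := ht
  rw [det2_add_smul_sub] at ht
  nlinarith

def IsEmptyTriangle (P : Set Pt) (u v w : Pt) : Prop :=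
  ∀ x ∈ P, x ∈ convexHull ℝ {u, v, w} → x ∈ ({u, v, w} : Set Pt)

theorem IsEmptyTriangle.swap {P : Set Pt} {u v w : Pt} (h : IsEmptyTriangle P u v w) :
    IsEmptyTriangle P u w v := by
  simpa only [IsEmptyTriangle, pair_comm] using h

theorem IsEmptyTriangle.eq_or_eq_of_mem_segment {P : Set Pt} {u v w : Pt}
    (h : IsEmptyTriangle P u v w) (hw : det2 u v w ≠ 0) {x : Pt} (hx : x ∈ P)
    (hseg : x ∈ segment ℝ u v) : x = u ∨ x = v := by
  rcases h x hx (segment_subset_convexHull (by simp) (by simp) hseg) with h | h | rfl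
  · exact .inl h
  · exact .inr h
  · exact absurd (det2_eq_zero_of_mem_segment hseg) hw

theorem exists_empty_subtriangle {P : Set Pt} (hP : P.Finite) {p a q : Pt} (hq : q ∈ P)
    (hq0 : det2 p a q ≠ 0) (hpa : ∀ x ∈ P, x ∈ segment ℝ p a → x = p ∨ x = a) :
    ∃ q' ∈ P, q' ∈ convexHull ℝ {p, a, q} ∧ det2 p a q' ≠ 0 ∧
      IsEmptyTriangle P p a q' := by
  obtain ⟨q', ⟨hq'P, hq'T, hq'0⟩, hmin⟩ := Set.exists_min_image
    {x ∈ P | x ∈ convexHull ℝ {p, a, q} ∧ det2 p a x ≠ 0} (fun x => |det2 p a x|)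
    (hP.subset (sep_subset _ _)) ⟨q, hq, subset_convexHull ℝ _ (by simp), hq0⟩
  refine ⟨q', hq'P, hq'T, hq'0, fun x hxP hx => ?_⟩
  have hxT : x ∈ convexHull ℝ {p, a, q} := by
    refine convexHull_min ?_ (convex_convexHull ℝ _) hx
    exact insert_subset (subset_convexHull ℝ _ (by simp))
      (insert_subset (subset_convexHull ℝ _ (by simp)) (singleton_subset_iff.2 hq'T))
  obtain ⟨l₁, l₂, l₃, h₁, h₂, h₃, hsum, rfl⟩ := mem_convexHull_triple.1 hx
  have hdet : det2 p a (l₁ • p + l₂ • a + l₃ • q') = l₃ * det2 p a q' := by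
    rw [det2_convexComb _ _ _ _ _ hsum]
    simp
  obtain rfl | hl₃ := eq_or_ne l₃ 0
  · have hseg : l₁ • p + l₂ • a + (0 : ℝ) • q' ∈ segment ℝ p a :=
      ⟨l₁, l₂, h₁, h₂, by linarith, by simp⟩
    rcases hpa _ hxP hseg with h | h <;> rw [h] <;> simp
  · have hle := hmin _ ⟨hxP, hxT, by rw [hdet]; exact mul_ne_zero hl₃ hq'0⟩
    simp only [hdet, abs_mul, abs_of_nonneg h₃] at hle
    obtain rfl : l₃ = 1 := by nlinarith [abs_pos.2 hq'0]
    obtain rfl : l₁ = 0 := by linarith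
    obtain rfl : l₂ = 0 := by linarith
    simp

def ConvexCyclicOrderWith {n : ℕ} [NeZero n] (σ : ℝ) (v : Fin n → Pt) : Prop :=
  ∀ i j : Fin n, j ≠ i → j ≠ i + 1 → 0 < σ * det2 (v i) (v (i + 1)) (v j)

namespace ConvexCyclicOrderWith

variable {σ : ℝ}

section

variable {n : ℕ} [NeZero n] {v : Fin n → Pt}

theorem det2_nonneg (hv : ConvexCyclicOrderWith σ v) (i m : Fin n) :
    0 ≤ σ * det2 (v i) (v (i + 1)) (v m) := by
  obtain rfl | hmi := eq_or_ne m i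
  · simp
  obtain rfl | hmi1 := eq_or_ne m (i + 1)
  · simp
  exact (hv i m hmi hmi1).le

theorem det2_nonneg_of_mem_convexHull (hv : ConvexCyclicOrderWith σ v) (i : Fin n) {x : Pt}
    (hx : x ∈ convexHull ℝ (range v)) : 0 ≤ σ * det2 (v i) (v (i + 1)) x :=
  convexHull_min (t := {y | 0 ≤ σ * det2 (v i) (v (i + 1)) y})
    (range_subset_iff.2 (hv.det2_nonneg i)) (convex_det2_nonneg _ _ σ) hx

theorem notMem_interior_convexHull (hv : ConvexCyclicOrderWith σ v) (hn : 2 < n) (k : Fin n) :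
    v k ∉ interior (convexHull ℝ (range v)) := by
  have ⟨hk2, hk2'⟩ : k + 2 ≠ k ∧ k + 2 ≠ k + 1 := by
    simp [Fin.ext_iff, Nat.mod_eq_of_lt hn, Nat.mod_eq_of_lt (by omega : 1 < n)]
  exact fun h => notMem_interior_det2_nonneg (hv k (k + 2) hk2 hk2')
    (interior_mono (fun x hx => hv.det2_nonneg_of_mem_convexHull k hx) h)

theorem update (hv : ConvexCyclicOrderWith σ v) (k : Fin n)
    (hdiag : ∀ j, j ≠ k → 0 ≤ σ * det2 (v (k - 1)) (v (k + 1)) (v j)) {x : Pt}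
    (hx : x ∈ convexHull ℝ {v (k - 1), v (k + 1), v k})
    (hx0 : det2 (v (k - 1)) (v (k + 1)) x ≠ 0) :
    ConvexCyclicOrderWith σ (Function.update v k x) := by
  obtain ⟨α, β, γ, hα, hβ, hγ, hsum, rfl⟩ := mem_convexHull_triple.1 hx
  have hx_det2 (u w : Pt) := det2_convexComb u w (v (k - 1)) (v (k + 1)) (v k) hsum
  replace hγ : 0 < γ := by
    refine hγ.lt_of_ne (Ne.symm fun h => hx0 ?_)
    rw [hx_det2, h]
    simp
  intro i j hji hji1
  have hii1 : i + 1 ≠ i := by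
    intro h
    obtain rfl : n = 1 := by simpa using h
    exact hji (Subsingleton.elim _ _)
  obtain rfl | hjk := eq_or_ne j k
  · rw [Function.update_of_ne hji.symm, Function.update_of_ne hji1.symm, Function.update_self,
      hx_det2]
    have := hv.det2_nonneg i (j - 1)
    have := hv.det2_nonneg i (j + 1)
    have := hv i j hji hji1
    nlinarith
  obtain rfl | hik := eq_or_ne i k
  · rw [Function.update_self, Function.update_of_ne hii1, Function.update_of_ne hjk,
      det2_cyclic, hx_det2]
    have h1 := hdiag j hjk
    have h2 := hv i j hji hji1
    rw [det2_cyclic] at h1 h2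
    simp only [det2_self_left]
    nlinarith
  obtain rfl | hi1k := eq_or_ne (i + 1) k
  · rw [Function.update_of_ne hii1.symm, Function.update_self, Function.update_of_ne hji1,
      ← det2_cyclic, hx_det2]
    have h1 := hdiag j hji1
    have h2 := hv i j hji hji1
    rw [← det2_cyclic] at h1 h2
    simp only [add_sub_cancel_right, det2_self_right] at h1 ⊢
    nlinarith
  simp only [Function.update_of_ne hik, Function.update_of_ne hi1k, Function.update_of_ne hjk]
  exact hv i j hji hji1

end

section

variable {v : Fin 5 → Pt}

theorem det2_pred_succ_nonneg (hv : ConvexCyclicOrderWith σ v) (k j : Fin 5) (hj : j ≠ k) :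
    0 ≤ σ * det2 (v (k - 1)) (v (k + 1)) (v j) := by
  have : j = k - 1 ∨ j = k + 1 ∨ j = k + 2 ∨ j = k - 2 := by revert k j; decide
  rcases this with rfl | rfl | rfl | rfl
  · simp
  · simp
  · rw [det2_cyclic, show k + 2 = k + 1 + 1 by revert k; decide]
    exact (hv (k + 1) (k - 1) (by revert k; decide) (by revert k; decide)).le
  · rw [← det2_cyclic, show k - 1 = k - 2 + 1 by revert k; decide]
    exact (hv (k - 2) (k + 1) (by revert k; decide) (by revert k; decide)).le

theorem mem_fan_of_mem_convexHull (hv : ConvexCyclicOrderWith σ v) {x : Pt}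
    (hx : x ∈ convexHull ℝ (range v)) :
    x ∈ convexHull ℝ {v 0, v 1, v 2} ∪ convexHull ℝ {v 0, v 2, v 3} ∪
      convexHull ℝ {v 0, v 3, v 4} := by
  have e₀ : 0 ≤ σ * det2 (v 0) (v 1) x := hv.det2_nonneg_of_mem_convexHull 0 hx
  have e₁ : 0 ≤ σ * det2 (v 1) (v 2) x := hv.det2_nonneg_of_mem_convexHull 1 hx
  have e₂ : 0 ≤ σ * det2 (v 2) (v 3) x := hv.det2_nonneg_of_mem_convexHull 2 hx
  have e₃ : 0 ≤ σ * det2 (v 3) (v 4) x := hv.det2_nonneg_of_mem_convexHull 3 hx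
  have e₄ : 0 ≤ σ * det2 (v 4) (v 0) x := hv.det2_nonneg_of_mem_convexHull 4 hx
  by_cases h₂ : σ * det2 (v 0) (v 2) x ≤ 0
  · refine Or.inl (Or.inl (mem_convexHull_triple_of_det2_nonneg (hv 0 2 (by decide) (by decide))
      e₁ ?_ e₀))
    rw [det2_swap]
    linarith
  by_cases h₃ : σ * det2 (v 0) (v 3) x ≤ 0
  · refine Or.inl (Or.inr (mem_convexHull_triple_of_det2_nonneg ?_ e₂ ?_ (by linarith)))
    · rw [det2_cyclic]
      exact hv 2 0 (by decide) (by decide)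
    · rw [det2_swap]
      linarith
  · refine Or.inr (mem_convexHull_triple_of_det2_nonneg ?_ e₃ e₄ (by linarith))
    rw [det2_cyclic]
    exact hv 3 0 (by decide) (by decide)

end

theorem update_one_four {p q a b r q' r' : Pt} (hv : ConvexCyclicOrderWith σ ![p, q, a, b, r])
    (hq' : q' ∈ convexHull ℝ {p, a, q}) (hq'0 : det2 p a q' ≠ 0)
    (hr' : r' ∈ convexHull ℝ {p, b, r}) (hr'0 : det2 p b r' ≠ 0) :
    ConvexCyclicOrderWith σ ![p, q', a, b, r'] := by
  have hv₁ : ConvexCyclicOrderWith σ ![p, q', a, b, r] := by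
    convert hv.update 1 (hv.det2_pred_succ_nonneg 1) hq' hq'0 using 1
    ext1 i
    fin_cases i <;> simp
  convert hv₁.update 4 (hv₁.det2_pred_succ_nonneg 4) (x := r') (by simpa [insert_comm] using hr')
    (by rw [det2_swap]; exact neg_ne_zero.2 hr'0) using 1
  ext1 i
  fin_cases i <;> simp

theorem notMem_interior_of_isEmptyTriangle {P : Set Pt} {v₀ v₁ v₂ v₃ v₄ : Pt}
    (hv : ConvexCyclicOrderWith σ ![v₀, v₁, v₂, v₃, v₄]) (h₁ : IsEmptyTriangle P v₀ v₁ v₂)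
    (h₂ : IsEmptyTriangle P v₀ v₂ v₃) (h₃ : IsEmptyTriangle P v₀ v₃ v₄) :
    ∀ x ∈ P, x ∉ interior (convexHull ℝ {v₀, v₁, v₂, v₃, v₄}) := by
  have hrange : range ![v₀, v₁, v₂, v₃, v₄] = {v₀, v₁, v₂, v₃, v₄} := by
    ext y
    simp [Matrix.range_cons]
    tauto
  intro x hxP hx
  rw [← hrange] at hx
  have hxv : x ∈ range ![v₀, v₁, v₂, v₃, v₄] := by
    rw [hrange]
    rcases hv.mem_fan_of_mem_convexHull (interior_subset hx) with (h | h) | h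
    · rcases h₁ x hxP (by simpa using h) with rfl | rfl | rfl <;> simp
    · rcases h₂ x hxP (by simpa using h) with rfl | rfl | rfl <;> simp
    · rcases h₃ x hxP (by simpa using h) with rfl | rfl | rfl <;> simp
  obtain ⟨k, rfl⟩ := hxv
  exact hv.notMem_interior_convexHull (by norm_num) k hx

end ConvexCyclicOrderWith

theorem stmt7_general (P : Set Pt) (hPfin : P.Finite)
    (p q a b r : Pt) (hq : q ∈ P) (hr : r ∈ P)
    (hpent : ConvexCyclicOrder ![p, q, a, b, r])
    (htri : ∀ x ∈ P, x ∈ convexHull ℝ ({p, a, b} : Set Pt) → x ∈ ({p, a, b} : Set Pt)) :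
    ∃ q' ∈ P, ∃ r' ∈ P,
      q' ∈ convexHull ℝ ({p, a, q} : Set Pt) ∧
      r' ∈ convexHull ℝ ({p, b, r} : Set Pt) ∧
      ConvexCyclicOrder ![p, q', a, b, r'] ∧
      ∀ x ∈ P, x ∉ interior (convexHull ℝ ({p, q', a, b, r'} : Set Pt)) := by
  obtain ⟨σ, hσ, hv⟩ := hpent
  have hv : ConvexCyclicOrderWith σ ![p, q, a, b, r] := hv
  have htri : IsEmptyTriangle P p a b := htri
  have hpab : det2 p a b ≠ 0 := by
    rw [det2_cyclic]
    exact right_ne_zero_of_mul (hv 2 0 (by decide) (by decide)).ne'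
  have hpba : det2 p b a ≠ 0 := by
    rw [det2_swap_right]
    exact neg_ne_zero.2 hpab
  have hpaq : det2 p a q ≠ 0 := by
    rw [det2_swap_right]
    exact neg_ne_zero.2 (right_ne_zero_of_mul (hv 0 2 (by decide) (by decide)).ne')
  have hpbr : det2 p b r ≠ 0 := by
    rw [det2_cyclic]
    exact right_ne_zero_of_mul (hv 3 0 (by decide) (by decide)).ne'
  obtain ⟨q', hq'P, hq'T, hq'0, hq'empty⟩ := exists_empty_subtriangle hPfin hq hpaq
    fun x hx => htri.eq_or_eq_of_mem_segment hpab hx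
  obtain ⟨r', hr'P, hr'T, hr'0, hr'empty⟩ := exists_empty_subtriangle hPfin hr hpbr
    fun x hx => htri.swap.eq_or_eq_of_mem_segment hpba hx
  have hv' := hv.update_one_four hq'T hq'0 hr'T hr'0
  exact ⟨q', hq'P, r', hr'P, hq'T, hr'T, ⟨σ, hσ, hv'⟩,
    hv'.notMem_interior_of_isEmptyTriangle hq'empty.swap htri hr'empty⟩

/-- if `p, q, a, b, r ∈ P` are the vertices of a convex pentagon
in that cyclic order and the triangle `p a b` contains no point of `P` other
than its vertices, then there are `q' ∈ P` in triangle `p a q` and `r' ∈ P` in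
triangle `p b r` such that `p, q', a, b, r'` is a 5-hole of `P`. -/
theorem stmt7 (P : Set Pt) (hPfin : P.Finite) (hgp : GenPos P)
    (p q a b r : Pt) (hp : p ∈ P) (hq : q ∈ P) (ha : a ∈ P) (hb : b ∈ P) (hr : r ∈ P)
    (hpent : ConvexCyclicOrder ![p, q, a, b, r])
    (htri : ∀ x ∈ P, x ∈ convexHull ℝ ({p, a, b} : Set Pt) → x ∈ ({p, a, b} : Set Pt)) :
    ∃ q' ∈ P, ∃ r' ∈ P,
      q' ∈ convexHull ℝ ({p, a, q} : Set Pt) ∧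
      r' ∈ convexHull ℝ ({p, b, r} : Set Pt) ∧
      ConvexCyclicOrder ![p, q', a, b, r'] ∧
      ∀ x ∈ P, x ∉ interior (convexHull ℝ ({p, q', a, b, r'} : Set Pt)) :=
  stmt7_general P hPfin p q a b r hq hr hpent htri
end
end

section
/- Let p₁, …, p₁₀ be the radial order with respect to a hull vertex p of an 11-point set P in general position, and suppose that for every index 1 ≤ i ≤ 8 the triangle p, pᵢ, p_{i+2} contains p_{i+1}. Then p₁p₂⋯p₁₀ is a convex polygon with no point of P in its interior; in particular p₁p₂p₃p₄p₅ is a 5-hole of P and the triangle p,p₁,p₂ is empty of points of P. -/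
open scoped Classical

noncomputable section

/-! Seen from `p`, the points `f 0, …, f 9` are in angular order, so `det2 p (f i) (f j)` has one
fixed sign `σ` for all `i < j`, while the triangle condition says that each consecutive triple
`f i, f (i+1), f (i+2)` turns with sign `-σ`. Two Grassmann–Plücker identities write the
orientation of `f i, f j, f k` (times a positive multiple) as a combination, with coefficients of
sign `σ`, of orientations of triples spanning fewer indices; by induction on `k - i` every
ordered triple turns with sign `-σ`, i.e. the `f i` are the vertices of a convex polygon. Every
edge line of this polygon supports it: each `f k` lies on its boundary, `p` lies beyond the edge
`f 0 f 1`, and the line `p f 1` separates the triangle `p, f 0, f 1` from every `f k`, `k ≥ 2`. -/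

open Topology

lemma det2_cyc (a b c : Pt) : det2 a b c = det2 b c a := by unfold det2; ring

lemma det2_swap_s11 (o a b : Pt) : det2 o a b = -det2 o b a := by unfold det2; ring

@[simp] lemma det2_self_left_s11 (a b : Pt) : det2 a a b = 0 := by unfold det2; ring

@[simp] lemma det2_self_right_s11 (a b : Pt) : det2 a b b = 0 := by unfold det2; ring

@[simp] lemma det2_self_outer (a b : Pt) : det2 a b a = 0 := by unfold det2; ring

lemma det2_smul_add_smul (a b x y : Pt) {s t : ℝ} (hst : s + t = 1) :
    det2 a b (s • x + t • y) = s * det2 a b x + t * det2 a b y := by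
  simp only [det2, PiLp.add_apply, PiLp.smul_apply, smul_eq_mul]
  linear_combination ((b 0 - a 0) * a 1 - (b 1 - a 1) * a 0) * hst

lemma sq_add_sq_pos_of_ne {a b : Pt} (hab : a ≠ b) : 0 < (b 0 - a 0) ^ 2 + (b 1 - a 1) ^ 2 := by
  have h := EuclideanSpace.real_norm_sq_eq (b - a)
  simp only [Fin.sum_univ_two, PiLp.sub_apply] at h
  rw [← h]
  exact pow_pos (norm_pos_iff.mpr (sub_ne_zero.mpr hab.symm)) 2

lemma collinear_of_det2_eq_zero {a b c : Pt} (hab : a ≠ b) (h : det2 a b c = 0) :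
    Collinear ℝ ({a, b, c} : Set Pt) := by
  have hd := sq_add_sq_pos_of_ne hab
  rw [show ({a, b, c} : Set Pt) = {c, a, b} by
    ext; simp only [Set.mem_insert_iff, Set.mem_singleton_iff]; tauto]
  apply collinear_insert_of_mem_affineSpan_pair
  -- `c - a` is its own orthogonal projection onto `b - a`
  convert smul_vsub_vadd_mem_affineSpan_pair
    (((c 0 - a 0) * (b 0 - a 0) + (c 1 - a 1) * (b 1 - a 1)) /
      ((b 0 - a 0) ^ 2 + (b 1 - a 1) ^ 2)) a b
  unfold det2 at h
  ext i
  fin_cases i <;>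
    simp only [Fin.zero_eta, Fin.mk_one, vsub_eq_sub, vadd_eq_add, PiLp.add_apply,
      PiLp.smul_apply, PiLp.sub_apply, smul_eq_mul] <;>
    field_simp
  · linear_combination (-(b 1 - a 1)) * h
  · linear_combination (b 0 - a 0) * h

lemma GenPos.det2_ne_zero {S : Set Pt} (hS : GenPos S) {a b c : Pt} (ha : a ∈ S) (hb : b ∈ S)
    (hc : c ∈ S) (hab : a ≠ b) (hac : a ≠ c) (hbc : b ≠ c) : det2 a b c ≠ 0 :=
  fun h => hS a ha b hb c hc hab hac hbc (collinear_of_det2_eq_zero hab h)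

section HalfPlane

variable (κ : ℝ) (a b : Pt)

lemma convex_setOf_nonneg_det2 : Convex ℝ {x | 0 ≤ κ * det2 a b x} := by
  intro x hx y hy s t hs ht hst
  simp only [Set.mem_ofPred_eq, det2_smul_add_smul a b x y hst] at *
  nlinarith [mul_nonneg hs hx, mul_nonneg ht hy]

lemma convex_setOf_pos_det2 : Convex ℝ {x | 0 < κ * det2 a b x} := by
  intro x hx y hy s t hs ht hst
  simp only [Set.mem_ofPred_eq, det2_smul_add_smul a b x y hst] at *
  rw [mul_add, mul_left_comm, mul_left_comm κ t]
  rcases hs.eq_or_lt with rfl | hs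
  · rw [zero_add] at hst
    simpa [hst] using hy
  · exact add_pos_of_pos_of_nonneg (mul_pos hs hx) (mul_nonneg ht hy.le)

variable {κ a b}

lemma notMem_convexHull_of_det2_neg {S : Set Pt} (hS : ∀ z ∈ S, 0 ≤ κ * det2 a b z) {x : Pt}
    (hx : κ * det2 a b x < 0) : x ∉ convexHull ℝ S :=
  fun h => hx.not_ge (convexHull_min hS (convex_setOf_nonneg_det2 κ a b) h)

lemma notMem_convexHull_of_det2_pos {S : Set Pt} (hS : ∀ z ∈ S, 0 < κ * det2 a b z) {x : Pt}
    (hx : det2 a b x = 0) : x ∉ convexHull ℝ S := by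
  intro h
  have : 0 < κ * det2 a b x := convexHull_min hS (convex_setOf_pos_det2 κ a b) h
  simp [hx] at this

lemma notMem_interior_convexHull_of_det2_eq_zero (hab : a ≠ b) (hκ : κ ≠ 0) {S : Set Pt}
    (hS : ∀ z ∈ S, 0 ≤ κ * det2 a b z) {x : Pt} (hx : det2 a b x = 0) :
    x ∉ interior (convexHull ℝ S) := by
  intro hint
  -- moving from `x` in the direction `w` leaves the closed half-plane at once
  set w : Pt := !₂[κ * (b 1 - a 1), -κ * (b 0 - a 0)]
  have hw (t : ℝ) :
      det2 a b (x + t • w) = -t * κ * ((b 0 - a 0) ^ 2 + (b 1 - a 1) ^ 2) := by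
    simp only [det2, w, PiLp.add_apply, PiLp.smul_apply, smul_eq_mul,
      Matrix.cons_val_zero, Matrix.cons_val_one] at hx ⊢
    linear_combination hx
  have hnear : ∀ᶠ t in 𝓝[>] (0 : ℝ), x + t • w ∈ interior (convexHull ℝ S) :=
    nhdsWithin_le_nhds <| (Continuous.continuousAt (by fun_prop)).preimage_mem_nhds
      (by simpa only [zero_smul, add_zero] using isOpen_interior.mem_nhds hint)
  obtain ⟨t, htS, ht⟩ := (hnear.and self_mem_nhdsWithin).exists
  have hmem : 0 ≤ κ * det2 a b (x + t • w) :=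
    convexHull_min hS (convex_setOf_nonneg_det2 κ a b) (interior_subset htS)
  have hd := sq_add_sq_pos_of_ne hab
  have : 0 < t * κ ^ 2 * ((b 0 - a 0) ^ 2 + (b 1 - a 1) ^ 2) := by positivity
  rw [hw] at hmem
  linarith

end HalfPlane

lemma det2_mul_det2_nonpos_of_mem_convexHull {p a c x : Pt}
    (hx : x ∈ convexHull ℝ {p, a, c}) : det2 a x c * det2 p a c ≤ 0 := by
  have hS : ∀ z ∈ ({p, a, c} : Set Pt), 0 ≤ -det2 p a c * det2 c a z := by
    rintro z (rfl | rfl | rfl)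
    · have : det2 c a z = -det2 z a c := by unfold det2; ring
      rw [this]
      nlinarith [sq_nonneg (det2 z a c)]
    · simp
    · simp
  have : 0 ≤ -det2 p a c * det2 c a x := convexHull_min hS (convex_setOf_nonneg_det2 _ c a) hx
  rw [det2_cyc a x c, det2_cyc x c a]
  linarith

lemma exists_sign_mul_pos {c : ℝ} (hc : c ≠ 0) : ∃ σ : ℝ, (σ = 1 ∨ σ = -1) ∧ 0 < σ * c := by
  rcases hc.lt_or_gt with h | h
  · exact ⟨-1, Or.inr rfl, by linarith⟩
  · exact ⟨1, Or.inl rfl, by linarith⟩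

lemma mul_pos_of_mul_pos_of_mul_pos {a b c : ℝ} (hab : 0 < a * b) (hbc : 0 < b * c) :
    0 < a * c :=
  pos_of_mul_pos_left (b := b * b) ((mul_pos hab hbc).trans_eq (by ring)) (mul_self_nonneg b)

lemma mul_pos_of_eq_mul {y z t : ℝ} (ht : 0 ≤ t) (hy : y ≠ 0) (h : y = t * z) : 0 < y * z :=
  pos_of_mul_pos_right (a := t) (by linear_combination mul_self_pos.mpr hy + y * h) ht

namespace InAngle

variable {a p c x : Pt}

lemma det2_left_mul_pos (h : InAngle a p c x) (hx : det2 p a x ≠ 0) :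
    0 < det2 p a x * det2 p a c := by
  obtain ⟨s, t, -, ht, rfl⟩ := h
  refine mul_pos_of_eq_mul ht hx ?_
  simp only [det2, PiLp.add_apply, PiLp.smul_apply, PiLp.sub_apply, smul_eq_mul]
  ring

lemma det2_right_mul_pos (h : InAngle a p c x) (hx : det2 p x c ≠ 0) :
    0 < det2 p x c * det2 p a c := by
  obtain ⟨s, t, hs, -, rfl⟩ := h
  refine mul_pos_of_eq_mul hs hx ?_
  simp only [det2, PiLp.add_apply, PiLp.smul_apply, PiLp.sub_apply, smul_eq_mul]
  ring

end InAngle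

lemma det2_mul_det2_pos_of_inAngle {n : ℕ} {v : Fin n → Pt} {p : Pt}
    (horder : ∀ i j k, i < j → j < k → InAngle (v i) p (v k) (v j))
    (hne : ∀ i j, i ≠ j → det2 p (v i) (v j) ≠ 0) {m i j M : Fin n}
    (hmi : m ≤ i) (hij : i < j) (hjM : j ≤ M) :
    0 < det2 p (v m) (v M) * det2 p (v i) (v j) := by
  have hmj : 0 < det2 p (v m) (v j) * det2 p (v m) (v M) := by
    rcases hjM.eq_or_lt with rfl | hjM
    · exact mul_self_pos.mpr (hne m j (by order))
    · exact (horder m j M (by order) hjM).det2_left_mul_pos (hne m j (by order))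
  have hij : 0 < det2 p (v i) (v j) * det2 p (v m) (v j) := by
    rcases hmi.eq_or_lt with rfl | hmi
    · exact mul_self_pos.mpr (hne m j hij.ne)
    · exact (horder m i j hmi hij).det2_right_mul_pos (hne i j hij.ne)
  rw [mul_comm]
  exact mul_pos_of_mul_pos_of_mul_pos hij hmj

lemma exists_sign_det2_pos_of_inAngle {n : ℕ} (hn : 0 < n) {v : Fin (n + 1) → Pt} {p : Pt}
    (horder : ∀ i j k, i < j → j < k → InAngle (v i) p (v k) (v j))
    (hne : ∀ i j, i ≠ j → det2 p (v i) (v j) ≠ 0) :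
    ∃ σ : ℝ, (σ = 1 ∨ σ = -1) ∧ ∀ i j, i < j → 0 < σ * det2 p (v i) (v j) := by
  obtain ⟨σ, hσ, hσpos⟩ := exists_sign_mul_pos
    (hne 0 (Fin.last n) (by rw [Ne, Fin.ext_iff, Fin.val_zero, Fin.val_last]; omega))
  exact ⟨σ, hσ, fun i j hij => mul_pos_of_mul_pos_of_mul_pos hσpos
    (det2_mul_det2_pos_of_inAngle horder hne (Fin.zero_le i) hij (Fin.le_last j))⟩

lemma neg_mul_det2_pos_of_mem_convexHull {p a c x : Pt} {σ : ℝ}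
    (hx : x ∈ convexHull ℝ {p, a, c}) (hne : det2 a x c ≠ 0) (hσ : 0 < σ * det2 p a c) :
    0 < -σ * det2 a x c := by
  have hσ0 : det2 p a c ≠ 0 := fun h0 => by simp [h0] at hσ
  have hneg : 0 < -det2 a x c * det2 p a c := by
    rw [neg_mul, neg_pos]
    exact (det2_mul_det2_nonpos_of_mem_convexHull hx).lt_of_ne (mul_ne_zero hne hσ0)
  have := mul_pos_of_mul_pos_of_mul_pos hneg (by rwa [mul_comm] at hσ)
  linarith

lemma det2_mul_det2_plucker_left (p a b c d : Pt) :
    det2 a c d * det2 p b c = det2 a b c * det2 p c d + det2 b c d * det2 p a c := by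
  unfold det2; ring

lemma det2_mul_det2_plucker_right (p a b c d : Pt) :
    det2 a b d * det2 p b c = det2 a b c * det2 p b d + det2 b c d * det2 p a b := by
  unfold det2; ring

lemma det2_pos_of_consecutive {n : ℕ} {v : Fin n → Pt} {p : Pt} {σ τ : ℝ}
    (hrad : ∀ i j, i < j → 0 < σ * det2 p (v i) (v j))
    (hloc : ∀ a b c : Fin n, a.val + 1 = b.val → b.val + 1 = c.val →
      0 < τ * det2 (v a) (v b) (v c))
    (i j k : Fin n) (hij : i < j) (hjk : j < k) : 0 < τ * det2 (v i) (v j) (v k) := by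
  if hj : i.val + 1 < j.val then
    let b : Fin n := ⟨i.val + 1, by omega⟩
    have hib : i < b := Fin.mk_lt_mk.mpr (by omega)
    have hbj : b < j := hj
    have hibj := det2_pos_of_consecutive hrad hloc i b j hib hbj
    have hbjk := det2_pos_of_consecutive hrad hloc b j k hbj hjk
    refine pos_of_mul_pos_left (b := σ * det2 p (v b) (v j)) ?_ (hrad b j hbj).le
    calc 0 < τ * det2 (v i) (v b) (v j) * (σ * det2 p (v j) (v k)) +
          τ * det2 (v b) (v j) (v k) * (σ * det2 p (v i) (v j)) := by
          have := hrad j k hjk; have := hrad i j hij; positivity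
      _ = _ := by
          linear_combination -τ * σ * det2_mul_det2_plucker_left p (v i) (v b) (v j) (v k)
  else if hk : j.val + 1 < k.val then
    let c : Fin n := ⟨k.val - 1, by omega⟩
    have hjc : j < c := Fin.mk_lt_mk.mpr (by omega)
    have hck : c < k := Fin.mk_lt_mk.mpr (by omega)
    have hijc := det2_pos_of_consecutive hrad hloc i j c hij hjc
    have hjck := det2_pos_of_consecutive hrad hloc j c k hjc hck
    refine pos_of_mul_pos_left (b := σ * det2 p (v j) (v c)) ?_ (hrad j c hjc).le
    calc 0 < τ * det2 (v i) (v j) (v c) * (σ * det2 p (v j) (v k)) +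
          τ * det2 (v j) (v c) (v k) * (σ * det2 p (v i) (v j)) := by
          have := hrad j k hjk; have := hrad i j hij; positivity
      _ = _ := by
          linear_combination -τ * σ * det2_mul_det2_plucker_right p (v i) (v j) (v c) (v k)
  else
    exact hloc i j k (by omega) (by omega)
termination_by k.val - i.val

def IsConvexChain {n : ℕ} (τ : ℝ) (v : Fin n → Pt) : Prop :=
  ∀ i j k, i < j → j < k → 0 < τ * det2 (v i) (v j) (v k)

lemma isConvexChain_of_mem_convexHull {n : ℕ} {v : Fin n → Pt} {p : Pt} {σ : ℝ}
    (hrad : ∀ i j, i < j → 0 < σ * det2 p (v i) (v j))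
    (hne : ∀ a b c, a ≠ b → a ≠ c → b ≠ c → det2 (v a) (v b) (v c) ≠ 0)
    (hmem : ∀ a b c : Fin n, a.val + 1 = b.val → b.val + 1 = c.val →
      v b ∈ convexHull ℝ {p, v a, v c}) : IsConvexChain (-σ) v :=
  det2_pos_of_consecutive hrad fun a b c hab hbc =>
    neg_mul_det2_pos_of_mem_convexHull (hmem a b c hab hbc)
      (hne a b c (by omega) (by omega) (by omega)) (hrad a c (by omega))

lemma Fin.sub_one_ne_self_of_one_le {n : ℕ} (hn : 1 ≤ n) (m : Fin (n + 1)) : m - 1 ≠ m := by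
  rw [Ne, sub_eq_self, Fin.ext_iff, Fin.val_one', Fin.val_zero, Nat.mod_eq_of_lt (by omega)]
  omega

lemma Fin.sub_one_ne_add_one {n : ℕ} (hn : 2 ≤ n) (m : Fin (n + 1)) : m - 1 ≠ m + 1 := by
  rw [Ne, sub_eq_iff_eq_add, add_assoc, left_eq_add, Fin.ext_iff, Fin.val_add, Fin.val_one',
    Fin.val_zero, Nat.mod_eq_of_lt (by omega : 1 < n + 1), Nat.mod_eq_of_lt (by omega)]
  omega

namespace IsConvexChain

variable {n : ℕ} {τ : ℝ} {v : Fin (n + 1) → Pt}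

lemma det2_edge_pos (hv : IsConvexChain τ v) {i j : Fin (n + 1)} (hji : j ≠ i)
    (hji1 : j ≠ i + 1) : 0 < τ * det2 (v i) (v (i + 1)) (v j) := by
  rcases (Fin.le_last i).eq_or_lt with rfl | hi
  · rw [Fin.last_add_one] at hji1 ⊢
    rw [det2_cyc]
    exact hv 0 j (Fin.last n) (Fin.pos_iff_ne_zero.mpr hji1) ((Fin.le_last j).lt_of_ne hji)
  · have h1 : (i + 1).val = i.val + 1 := Fin.val_add_one_of_lt hi
    have hi1 : i < i + 1 := Fin.lt_def.mpr (by omega)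
    rcases hji.lt_or_gt with hj | hj
    · rw [← det2_cyc]
      exact hv j i (i + 1) hj hi1
    · exact hv i (i + 1) j hi1 (Fin.lt_def.mpr (by have := Fin.val_ne_of_ne hji1; omega))

lemma det2_edge_nonneg (hv : IsConvexChain τ v) (i j : Fin (n + 1)) :
    0 ≤ τ * det2 (v i) (v (i + 1)) (v j) := by
  by_cases hji : j = i
  · simp [hji]
  by_cases hji1 : j = i + 1
  · simp [hji1]
  exact (hv.det2_edge_pos hji hji1).le

lemma convexCyclicOrder (hv : IsConvexChain τ v) (hτ : τ = 1 ∨ τ = -1) : ConvexCyclicOrder v :=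
  ⟨τ, hτ, fun _ _ => hv.det2_edge_pos⟩

lemma det2_pred_pos (hv : IsConvexChain τ v) (hn : 2 ≤ n) (m : Fin (n + 1)) :
    0 < τ * det2 (v m) (v (m + 1)) (v (m - 1)) :=
  hv.det2_edge_pos (Fin.sub_one_ne_self_of_one_le (by omega) m) (Fin.sub_one_ne_add_one hn m)

lemma apply_notMem_convexHull (hv : IsConvexChain τ v) (hn : 2 ≤ n) {S : Set Pt}
    (hS : S ⊆ Set.range v) (m : Fin (n + 1)) : v m ∉ convexHull ℝ (S \ {v m}) := by
  set a := m - 1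
  have ham : a + 1 = m := sub_add_cancel m 1
  -- the sum of the supporting functionals of the two edges at `v m`
  have hsum (z : Pt) : det2 (v m) (v m + (v (m + 1) - v a)) z =
      det2 (v a) (v m) z + det2 (v m) (v (m + 1)) z := by
    simp only [det2, PiLp.add_apply, PiLp.sub_apply]; ring
  refine notMem_convexHull_of_det2_pos (κ := τ) (b := v m + (v (m + 1) - v a)) ?_
    (det2_self_outer _ _)
  rintro _ ⟨hzS, hzm⟩
  obtain ⟨l, rfl⟩ := hS hzS
  have hlm : l ≠ m := by rintro rfl; exact hzm rfl
  have h1 := hv.det2_edge_nonneg a l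
  have h2 := hv.det2_edge_nonneg m l
  rw [ham] at h1
  rw [hsum, mul_add]
  by_cases hla : l = a
  · have := hv.det2_edge_pos hlm (hla ▸ Fin.sub_one_ne_add_one hn m)
    linarith
  · have := hv.det2_edge_pos hla (by rwa [ham])
    rw [ham] at this
    linarith

lemma apply_notMem_interior_convexHull (hv : IsConvexChain τ v) (hn : 2 ≤ n) {S : Set Pt}
    (hS : S ⊆ Set.range v) (m : Fin (n + 1)) : v m ∉ interior (convexHull ℝ S) := by
  have hpred := hv.det2_pred_pos hn m
  refine notMem_interior_convexHull_of_det2_eq_zero (a := v m) (b := v (m + 1)) (κ := τ)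
    (fun h => ?_) (fun h => ?_) ?_ (det2_self_outer _ _)
  · simp [h] at hpred
  · simp [h] at hpred
  · rintro _ hz
    obtain ⟨l, rfl⟩ := hS hz
    exact hv.det2_edge_nonneg m l

lemma notMem_interior_convexHull_range (hv : IsConvexChain τ v) (hn : 2 ≤ n) {p : Pt}
    (hp : τ * det2 (v 0) (v 1) p < 0) {x : Pt} (hx : x ∈ insert p (Set.range v)) :
    x ∉ interior (convexHull ℝ (Set.range v)) := by
  rcases hx with rfl | ⟨m, rfl⟩
  · refine fun hint => notMem_convexHull_of_det2_neg ?_ hp (interior_subset hint)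
    rintro _ ⟨l, rfl⟩
    simpa only [zero_add] using hv.det2_edge_nonneg 0 l
  · exact hv.apply_notMem_interior_convexHull hn subset_rfl m

lemma mem_holes5 (hv : IsConvexChain τ v) (hn : 2 ≤ n) {P : Set Pt} {H : Finset Pt}
    (hcard : H.card = 5) (hH : ↑H ⊆ Set.range v) (hP : Set.range v ⊆ P)
    (hempty : ∀ x ∈ P, x ∉ interior (convexHull ℝ (Set.range v))) : H ∈ Holes5 P := by
  refine ⟨hcard, hH.trans hP, fun q hq => ?_, fun x hx hint => ?_⟩
  · obtain ⟨m, rfl⟩ := hH hq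
    exact hv.apply_notMem_convexHull hn hH m
  · exact hempty x hx (interior_mono (convexHull_mono hH) hint)

end IsConvexChain

lemma apply_notMem_convexHull_triangle {n : ℕ} {v : Fin n → Pt} {p : Pt} {σ : ℝ}
    (hrad : ∀ i j, i < j → 0 < σ * det2 p (v i) (v j)) {i j k : Fin n} (hij : i < j)
    (hjk : j < k) : v k ∉ convexHull ℝ {p, v i, v j} := by
  refine notMem_convexHull_of_det2_neg (κ := -σ) (a := p) (b := v j) ?_ ?_
  · rintro z (rfl | rfl | rfl)
    · simp
    · rw [det2_swap_s11]; linarith [hrad i j hij]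
    · simp
  · linarith [hrad j k hjk]

theorem stmt11_general (P : Finset Pt) (hgp : GenPos ↑P)
    (p : Pt) (hp : p ∈ P)
    (f : Fin 10 → Pt) (hinj : Function.Injective f)
    (hrange : Set.range f = (↑P : Set Pt) \ {p})
    (horder : ∀ i j k : Fin 10, i < j → j < k → InAngle (f i) p (f k) (f j))
    (hcontain : ∀ i : Fin 10, i.val ≤ 7 →
      f (i + 1) ∈ convexHull ℝ ({p, f i, f (i + 2)} : Set Pt)) :
    (ConvexCyclicOrder f ∧
      ∀ x ∈ (↑P : Set Pt), x ∉ interior (convexHull ℝ (Set.range f))) ∧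
    ({f 0, f 1, f 2, f 3, f 4} : Finset Pt) ∈ Holes5 (↑P : Set Pt) ∧
    (∀ x ∈ (↑P : Set Pt), x ∈ convexHull ℝ ({p, f 0, f 1} : Set Pt) →
      x ∈ ({p, f 0, f 1} : Set Pt)) := by
  have hP : (↑P : Set Pt) = insert p (Set.range f) := by
    rw [hrange, Set.insert_sdiff_singleton, Set.insert_eq_of_mem hp]
  have hfP (i : Fin 10) : f i ∈ (↑P : Set Pt) := hP ▸ Or.inr (Set.mem_range_self i)
  have hfp (i : Fin 10) : f i ≠ p := by
    have := Set.mem_range_self (f := f) i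
    rw [hrange] at this
    exact this.2
  obtain ⟨σ, hσ, hrad⟩ := exists_sign_det2_pos_of_inAngle (by norm_num) horder fun i j hij =>
    hgp.det2_ne_zero hp (hfP i) (hfP j) (hfp i).symm (hfp j).symm (hinj.ne hij)
  have hchain : IsConvexChain (-σ) f := by
    refine isConvexChain_of_mem_convexHull hrad (fun a b c hab hac hbc => hgp.det2_ne_zero
      (hfP a) (hfP b) (hfP c) (hinj.ne hab) (hinj.ne hac) (hinj.ne hbc)) fun a b c hab hbc => ?_
    obtain ⟨rfl, rfl⟩ : b = a + 1 ∧ c = a + 2 := by omega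
    exact hcontain a (by omega)
  have hempty (x : Pt) (hx : x ∈ (↑P : Set Pt)) : x ∉ interior (convexHull ℝ (Set.range f)) :=
    hchain.notMem_interior_convexHull_range (by norm_num)
      (by rw [← det2_cyc]; linarith [hrad 0 1 (by decide)]) (hP ▸ hx)
  refine ⟨⟨hchain.convexCyclicOrder (by rcases hσ with rfl | rfl <;> norm_num), hempty⟩,
    hchain.mem_holes5 (by norm_num) ?_ ?_ (fun _ ⟨i, hi⟩ => hi ▸ hfP i) hempty, ?_⟩
  · simp [Finset.card_insert_of_notMem, hinj.eq_iff]
  · simp [Set.insert_subset_iff]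
  · intro x hx hxT
    rcases hP ▸ hx with rfl | ⟨k, rfl⟩
    · exact Or.inl rfl
    · by_contra hk
      simp only [Set.mem_insert_iff, Set.mem_singleton_iff, hinj.eq_iff, not_or] at hk
      exact apply_notMem_convexHull_triangle hrad (by decide : (0 : Fin 10) < 1)
        (show 1 < k by omega) hxT

/-- let `f 0, …, f 9` be the radial order around a hull vertex
`p` of an 11-point set `P` in general position, and suppose each triangle
`p, f i, f (i+2)` contains `f (i+1)`. Then `f 0 ⋯ f 9` is a convex polygon
with no point of `P` in its interior; in particular `{f 0, …, f 4}` is a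
5-hole of `P` and the triangle `p, f 0, f 1` contains no point of `P` other
than its vertices. -/
theorem stmt11 (P : Finset Pt) (h11 : P.card = 11) (hgp : GenPos ↑P)
    (p : Pt) (hp : p ∈ P) (hext : p ∉ convexHull ℝ ((↑P : Set Pt) \ {p}))
    (f : Fin 10 → Pt) (hinj : Function.Injective f)
    (hrange : Set.range f = (↑P : Set Pt) \ {p})
    (horder : ∀ i j k : Fin 10, i < j → j < k → InAngle (f i) p (f k) (f j))
    (hangle : EuclideanGeometry.angle (f 0) p (f 9) < Real.pi)
    (hcontain : ∀ i : Fin 10, i.val ≤ 7 →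
      f (i + 1) ∈ convexHull ℝ ({p, f i, f (i + 2)} : Set Pt)) :
    (ConvexCyclicOrder f ∧
      ∀ x ∈ (↑P : Set Pt), x ∉ interior (convexHull ℝ (Set.range f))) ∧
    ({f 0, f 1, f 2, f 3, f 4} : Finset Pt) ∈ Holes5 (↑P : Set Pt) ∧
    (∀ x ∈ (↑P : Set Pt), x ∈ convexHull ℝ ({p, f 0, f 1} : Set Pt) →
      x ∈ ({p, f 0, f 1} : Set Pt)) :=
  stmt11_general P hgp p hp f hinj hrange horder hcontain
end
end

section
/- Let a, b, c be three distinct points in the plane with no three of {p, a, b, c} collinear, and let p be a point such that the clockwise angle ∠abc measured at b exceeds π (i.e., a, b, c form a reflex configuration as seen appropriately) and p lies on the convex side. Then p, a, b, c are in convex position, i.e., the quadrilateral p, a, b, c (in that order) is convex. -/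
open scoped Classical

noncomputable section

set_option maxHeartbeats 1000000 in
/-- if the clockwise angle `∠abc` at `b` exceeds `π`
(equivalently `det2 b a c > 0`), and `p` lies on the convex side — in the
angular region `∠cba` at `b` and strictly on the other side of the line `ac`
from `b` — with no three of `{p, a, b, c}` collinear, then `p, a, b, c` are
the vertices of a convex quadrilateral in that order. -/
theorem stmt19 (p a b c : Pt)
    (hgp : ∀ x ∈ ({p, a, b, c} : Set Pt), ∀ y ∈ ({p, a, b, c} : Set Pt),
      ∀ z ∈ ({p, a, b, c} : Set Pt), x ≠ y → x ≠ z → y ≠ z →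
        ¬ Collinear ℝ ({x, y, z} : Set Pt))
    (hreflex : 0 < det2 b a c)
    (hcone : InAngle c b a p)
    (hhalf : det2 a c p * det2 a c b < 0) :
    ConvexCyclicOrder ![p, a, b, c] := by
  obtain ⟨s, t, hs, ht, hp⟩ := hcone
  have key0 : p 0 = b 0 + s * (c 0 - b 0) + t * (a 0 - b 0) := by
    rw [hp]; simp [PiLp.add_apply, PiLp.smul_apply, PiLp.sub_apply, smul_eq_mul]
  have key1 : p 1 = b 1 + s * (c 1 - b 1) + t * (a 1 - b 1) := by
    rw [hp]; simp [PiLp.add_apply, PiLp.smul_apply, PiLp.sub_apply, smul_eq_mul]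
  have hacb : det2 a c b = det2 b a c := by simp only [det2]; ring
  have hacp : det2 a c p < 0 := by nlinarith [hhalf, hreflex]
  -- distinctness
  have hab : a ≠ b := by
    rintro rfl; simp only [det2] at hreflex; nlinarith
  have hac : a ≠ c := by
    rintro rfl; simp only [det2] at hreflex; nlinarith
  have hbc : b ≠ c := by
    rintro rfl; simp only [det2] at hreflex; nlinarith
  have hpa : p ≠ a := by
    rintro rfl; simp only [det2] at hhalf hacp; nlinarith
  have hpb : p ≠ b := by
    rintro rfl; nlinarith [hhalf, hacb, hreflex]
  have hpc : p ≠ c := by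
    rintro rfl; simp only [det2] at hhalf; nlinarith
  -- s and t are positive
  have hs' : 0 < s := by
    rcases hs.lt_or_eq with h | h
    · exact h
    · exfalso
      have hmem : p ∈ affineSpan ℝ ({b, a} : Set Pt) := by
        have : p = AffineMap.lineMap b a t := by
          rw [hp, ← h, AffineMap.lineMap_apply]
          simp
          module
        rw [this]
        exact AffineMap.lineMap_mem_affineSpan_pair t b a
      exact hgp p (by simp) b (by simp) a (by simp) hpb hpa hab.symm
        (collinear_insert_of_mem_affineSpan_pair hmem)
  have ht' : 0 < t := by
    rcases ht.lt_or_eq with h | h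
    · exact h
    · exfalso
      have hmem : p ∈ affineSpan ℝ ({b, c} : Set Pt) := by
        have : p = AffineMap.lineMap b c s := by
          rw [hp, ← h, AffineMap.lineMap_apply]
          simp
          module
        rw [this]
        exact AffineMap.lineMap_mem_affineSpan_pair s b c
      exact hgp p (by simp) b (by simp) c (by simp) hpb hpc hbc
        (collinear_insert_of_mem_affineSpan_pair hmem)
  have e1 : det2 p a b = -(s * det2 b a c) := by
    simp only [det2, key0, key1]; ring
  have e2 : det2 b c p = -(t * det2 b a c) := by
    simp only [det2, key0, key1]; ring
  have g1 : (0:ℝ) < -1 * det2 p a b := by nlinarith [e1, mul_pos hs' hreflex]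
  have g2 : (0:ℝ) < -1 * det2 p a c := by
    have h : det2 p a c = det2 a c p := by simp only [det2]; ring
    linarith [hacp]
  have g3 : (0:ℝ) < -1 * det2 a b c := by
    have h : det2 a b c = -det2 b a c := by simp only [det2]; ring
    linarith [hreflex]
  have g4 : (0:ℝ) < -1 * det2 a b p := by
    have h : det2 a b p = det2 p a b := by simp only [det2]; ring
    linarith [g1]
  have g5 : (0:ℝ) < -1 * det2 b c p := by nlinarith [e2, mul_pos ht' hreflex]
  have g6 : (0:ℝ) < -1 * det2 b c a := by
    have h : det2 b c a = -det2 b a c := by simp only [det2]; ring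
    linarith [hreflex]
  have g7 : (0:ℝ) < -1 * det2 c p a := by
    have h : det2 c p a = det2 a c p := by simp only [det2]; ring
    linarith [hacp]
  have g8 : (0:ℝ) < -1 * det2 c p b := by
    have h : det2 c p b = det2 b c p := by simp only [det2]; ring
    linarith [g5]
  refine ⟨-1, Or.inr rfl, ?_⟩
  intro i j h1 h2
  fin_cases i <;> fin_cases j <;>
    first
      | exact absurd (by decide) h1
      | exact absurd (by decide) h2
      | exact g1
      | exact g2
      | exact g3
      | exact g4
      | exact g5
      | exact g6
      | exact g7
      | exact g8
end
end
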